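/- Let F be a 2t-repeated k-non-signaling function from ({0,1}^n)^{2t} to ({0,1})^{2t} that is permutation folded and passes the linearity test with probability at least 1-ε, where k ≥ 6. Then for uniformly random R, W ∈ ({0,1}^n)^t and any fixed Q ∈ ({0,1}^n)^t, Pr[F([Q+R;W])_j = F([R;W])_j for all j ∈ {t+1,...,2t}] ≥ 1-4ε, assuming F also passes the consistency test with probability at least 1-ε. -/

import Mathlib

/-!
Folding under the permutation that swaps the two halves of the coordinates turns agreement of
`F([Q+R;W])` and `F([R;W])` on the second half into agreement of `F([W;Q+R])` and `F([W;R])` on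
the first half. Non-signaling lets `F` answer `[W;Q+R]`, `[W;R]` and `[W;Z]` jointly for an
auxiliary uniform `Z`, and agreement on the first half is transitive, so by a union bound this
probability is at least the sum of the probabilities that `F([W;Q+R])`, resp. `F([W;R])`, agrees
with `F([W;Z])` there, minus one. Both `(W, Q+R, Z)` and `(W, R, Z)` are uniform triples, so each
term is the acceptance probability of the consistency test, which gives the bound `1 - 2ε`.
-/

noncomputable def prob {α : Type*} (p : PMF α) (E : Set α) : ℝ :=
  (p.toOuterMeasure E).toReal

def restrictAssign {D A : Type*} {S T : Finset D} (h : T ⊆ S)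
    (f : {x // x ∈ S} → A) : {x // x ∈ T} → A :=
  fun x => f ⟨x.1, h x.2⟩

noncomputable def marginal {D A : Type*} {S : Finset D} (p : PMF ({x // x ∈ S} → A))
    {T : Finset D} (h : T ⊆ S) : PMF ({x // x ∈ T} → A) :=
  p.map (restrictAssign h)

def IsNonSignaling {D A : Type*} [DecidableEq D] (k : ℕ)
    (F : (S : Finset D) → PMF ({x // x ∈ S} → A)) : Prop :=
  ∀ S T : Finset D, S.card ≤ k → T.card ≤ k →
    marginal (F S) (Finset.inter_subset_left : S ∩ T ⊆ S) =
    marginal (F T) (Finset.inter_subset_right : S ∩ T ⊆ T)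

def permQ {t : ℕ} {β : Type*} (π : Equiv.Perm (Fin t)) (Q : Fin t → β) : Fin t → β :=
  fun j => Q (π j)

def IsPermFolded {t : ℕ} {D A : Type*} [DecidableEq D] (k : ℕ)
    (F : (S : Finset (Fin t → D)) → PMF ({Q // Q ∈ S} → (Fin t → A))) : Prop :=
  ∀ (ℓ : ℕ) (Q : Fin ℓ → (Fin t → D)) (π : Fin ℓ → Equiv.Perm (Fin t))
    (b : Fin ℓ → (Fin t → A)), ℓ ≤ k →
    prob (F (Finset.image Q Finset.univ))
      {f | ∀ i : Fin ℓ, f ⟨Q i, Finset.mem_image_of_mem _ (Finset.mem_univ i)⟩ = b i} =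
    prob (F (Finset.image (fun i => permQ (π i) (Q i)) Finset.univ))
      {f | ∀ i : Fin ℓ, f ⟨permQ (π i) (Q i),
          Finset.mem_image_of_mem _ (Finset.mem_univ i)⟩ = permQ (π i) (b i)}

/-- A `2t`-repeated non-signaling function over `{0,1}^n`. -/
abbrev NSFam (n t : ℕ) :=
  (S : Finset (Fin t → Fin n → ZMod 2)) → PMF ({Q // Q ∈ S} → (Fin t → ZMod 2))

/-- Acceptance probability of the linearity test: sample uniform `X, Y`, query `F` on
`{X, Y, X+Y}` and check `F(X) + F(Y) = F(X+Y)` in all coordinates. -/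
noncomputable def linTestAccept {n t : ℕ} (F : NSFam n t) : ℝ :=
  prob ((PMF.uniformOfFintype ((Fin t → Fin n → ZMod 2) × (Fin t → Fin n → ZMod 2))).bind
    fun p => (F {p.1, p.2, p.1 + p.2}).map fun f =>
      (f ⟨p.1, by simp⟩, f ⟨p.2, by simp⟩, f ⟨p.1 + p.2, by simp⟩))
    {y | y.1 + y.2.1 = y.2.2}

/-- Acceptance probability of the consistency test on a `2t`-repeated function: sample
uniform `W, Z₁, Z₂`, query `F` on `{[W;Z₁], [W;Z₂]}` and check that the answers agree
on the first `t` coordinates. -/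
noncomputable def consTestAccept {n t : ℕ} (F : NSFam n (t + t)) : ℝ :=
  prob ((PMF.uniformOfFintype ((Fin t → Fin n → ZMod 2) × (Fin t → Fin n → ZMod 2) ×
      (Fin t → Fin n → ZMod 2))).bind
    fun w => (F {Fin.append w.1 w.2.1, Fin.append w.1 w.2.2}).map fun f =>
      (f ⟨Fin.append w.1 w.2.1, by simp⟩, f ⟨Fin.append w.1 w.2.2, by simp⟩))
    {y : (Fin (t + t) → ZMod 2) × (Fin (t + t) → ZMod 2) |
      ∀ j : Fin t, y.1 (Fin.castAdd t j) = y.2 (Fin.castAdd t j)}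

/-- The self-correction of a `2t`-repeated non-signaling function: a query `Q` is
answered by sampling fresh independent uniform `R, W`, querying `F` on
`{[R;W], [Q+R;W]}`, and returning the first `t` coordinates of
`F([R;W]) + F([Q+R;W])`. -/
noncomputable def selfCorrect {n t : ℕ} (F : NSFam n (t + t)) : NSFam n t :=
  fun S =>
    (PMF.uniformOfFintype (({Q // Q ∈ S} → (Fin t → Fin n → ZMod 2)) ×
        ({Q // Q ∈ S} → (Fin t → Fin n → ZMod 2)))).bind fun RW =>
      (F (Finset.univ.biUnion fun Q : {Q // Q ∈ S} =>
          {Fin.append (RW.1 Q) (RW.2 Q), Fin.append (Q.1 + RW.1 Q) (RW.2 Q)})).map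
        fun f Q j =>
          f ⟨Fin.append (RW.1 Q) (RW.2 Q),
              Finset.mem_biUnion.mpr ⟨Q, Finset.mem_univ _, Finset.mem_insert_self _ _⟩⟩
            (Fin.castAdd t j)
          + f ⟨Fin.append (Q.1 + RW.1 Q) (RW.2 Q),
              Finset.mem_biUnion.mpr ⟨Q, Finset.mem_univ _,
                Finset.mem_insert_of_mem (Finset.mem_singleton_self _)⟩⟩
            (Fin.castAdd t j)

open MeasureTheory
open scoped BigOperators

section Probability

variable {α β : Type*}

lemma PMF.toOuterMeasure_ne_top (p : PMF α) (E : Set α) : p.toOuterMeasure E ≠ ⊤ := by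
  let _ : MeasurableSpace α := ⊤
  exact ne_top_of_le_ne_top (measure_ne_top _ _)
    (p.toOuterMeasure_apply_le_toMeasure_apply E)

lemma prob_eq_measureReal (p : PMF α) (E : Set α) :
    prob p E = (@PMF.toMeasure α ⊤ p).real E := by
  let _ : MeasurableSpace α := ⊤
  rw [prob, measureReal_def,
    p.toMeasure_apply_eq_toOuterMeasure_apply MeasurableSpace.measurableSet_top]

lemma prob_le_one (p : PMF α) (E : Set α) : prob p E ≤ 1 := by
  let _ : MeasurableSpace α := ⊤
  rw [prob_eq_measureReal]
  exact measureReal_le_one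

lemma prob_mono (p : PMF α) {E₁ E₂ : Set α} (h : E₁ ⊆ E₂) : prob p E₁ ≤ prob p E₂ := by
  let _ : MeasurableSpace α := ⊤
  simp only [prob_eq_measureReal]
  exact measureReal_mono h

lemma prob_add_prob_le (p : PMF α) (E₁ E₂ : Set α) :
    prob p E₁ + prob p E₂ ≤ prob p (E₁ ∩ E₂) + 1 := by
  let _ : MeasurableSpace α := ⊤
  simp only [prob_eq_measureReal]
  rw [← measureReal_union_add_inter (s := E₁) MeasurableSpace.measurableSet_top, add_comm]
  gcongr
  exact measureReal_le_one

lemma prob_map (p : PMF α) (g : α → β) (E : Set β) : prob (p.map g) E = prob p (g ⁻¹' E) := by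
  rw [prob, prob, PMF.toOuterMeasure_map_apply]

lemma prob_bind_uniformOfFintype [Fintype α] [Nonempty α] (q : α → PMF β) (E : Set β) :
    prob ((PMF.uniformOfFintype α).bind q) E = 𝔼 a, prob (q a) E := by
  rw [prob, PMF.toOuterMeasure_bind_apply, tsum_fintype, ENNReal.toReal_sum,
    Finset.expect_eq_sum_div_card, Finset.sum_div]
  · refine Finset.sum_congr rfl fun a _ => ?_
    simp [prob, ENNReal.toReal_inv, div_eq_inv_mul]
  · exact fun a _ => ENNReal.mul_ne_top (PMF.apply_ne_top _ a) ((q a).toOuterMeasure_ne_top E)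

end Probability

section NonSignaling

variable {D A β : Type*} [DecidableEq D] {k : ℕ} {F : (S : Finset D) → PMF ({x // x ∈ S} → A)}

lemma IsNonSignaling.map_eq_map_restrictAssign (hns : IsNonSignaling k F) {S T : Finset D}
    (hTS : T ⊆ S) (hS : S.card ≤ k) (hT : T.card ≤ k) (g : ({x // x ∈ T} → A) → β) :
    (F T).map g = (F S).map (g ∘ restrictAssign hTS) := by
  have h := congrArg
    (PMF.map fun f : {x // x ∈ S ∩ T} → A => g fun x => f ⟨x.1, Finset.mem_inter.2 ⟨hTS x.2, x.2⟩⟩)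
    (hns S T hS hT)
  simp only [marginal, PMF.map_comp] at h
  exact h.symm

variable (F) in
noncomputable def pairLaw (x y : D) : PMF (A × A) :=
  (F {x, y}).map fun f => (f ⟨x, by simp⟩, f ⟨y, by simp⟩)

lemma pairLaw_eq_map_of_eq {x y : D} {S : Finset D} (h : S = {x, y}) :
    pairLaw F x y = (F S).map fun f => (f ⟨x, by simp [h]⟩, f ⟨y, by simp [h]⟩) := by
  subst h
  rfl

lemma IsNonSignaling.pairLaw_eq_map (hns : IsNonSignaling k F) (hk : 2 ≤ k) {x y : D}
    {S : Finset D} (hxS : x ∈ S) (hyS : y ∈ S) (hS : S.card ≤ k) :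
    pairLaw F x y = (F S).map fun f => (f ⟨x, hxS⟩, f ⟨y, hyS⟩) :=
  hns.map_eq_map_restrictAssign (Finset.insert_subset hxS (Finset.singleton_subset_iff.2 hyS)) hS
    (Finset.card_le_two.trans hk) _

-- The three pair laws are marginals of the joint answer to `{x, y, z}`.
lemma IsNonSignaling.prob_pairLaw_add_le (hns : IsNonSignaling k F) (hk : 3 ≤ k)
    {r : A → A → Prop} (hr : ∀ a b c, r a c → r b c → r a b) (x y z : D) :
    prob (pairLaw F x z) {p | r p.1 p.2} + prob (pairLaw F y z) {p | r p.1 p.2}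
      ≤ prob (pairLaw F x y) {p | r p.1 p.2} + 1 := by
  have hS : ({x, y, z} : Finset D).card ≤ k := Finset.card_le_three.trans hk
  rw [hns.pairLaw_eq_map (by omega) (by simp) (by simp) hS,
    hns.pairLaw_eq_map (by omega) (by simp) (by simp) hS,
    hns.pairLaw_eq_map (by omega) (by simp) (by simp) hS, prob_map, prob_map, prob_map]
  refine (prob_add_prob_le _ _ _).trans ?_
  gcongr
  exact prob_mono _ fun f hf => hr _ _ _ hf.1 hf.2

end NonSignaling

section Folding

variable {t k : ℕ} {D A : Type*} [DecidableEq D]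
  {F : (S : Finset (Fin t → D)) → PMF ({Q // Q ∈ S} → (Fin t → A))}

lemma pairLaw_apply_toReal (q : Fin 2 → Fin t → D) (b : Fin 2 → Fin t → A) :
    (pairLaw F (q 0) (q 1) (b 0, b 1)).toReal
      = prob (F (Finset.image q Finset.univ))
          {f | ∀ i, f ⟨q i, Finset.mem_image_of_mem _ (Finset.mem_univ i)⟩ = b i} := by
  have hq : Finset.image q Finset.univ = {q 0, q 1} := by
    ext x
    simp [Fin.exists_fin_two, eq_comm]
  rw [pairLaw_eq_map_of_eq hq, ← PMF.toOuterMeasure_apply_singleton,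
    PMF.toOuterMeasure_map_apply, prob]
  congr 2
  ext f
  simp [Fin.forall_fin_two, Prod.ext_iff]

lemma IsPermFolded.pairLaw_permQ (hfold : IsPermFolded k F) (hk : 2 ≤ k)
    (π : Equiv.Perm (Fin t)) (q₁ q₂ : Fin t → D) :
    pairLaw F (permQ π q₁) (permQ π q₂)
      = (pairLaw F q₁ q₂).map (Prod.map (permQ π) (permQ π)) := by
  have hinv : ∀ c : Fin t → A, permQ π (permQ π.symm c) = c := fun c => by
    funext j
    simp [permQ]
  have hinj : Function.Injective (permQ (β := A) π) := fun a b h => by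
    funext j
    simpa [permQ] using congrFun h (π.symm j)
  ext c
  obtain ⟨⟨b₁, b₂⟩, rfl⟩ : ∃ b, Prod.map (permQ π) (permQ π) b = c :=
    ⟨(permQ π.symm c.1, permQ π.symm c.2), Prod.ext (hinv _) (hinv _)⟩
  rw [PMF.map_apply,
    tsum_eq_single (b₁, b₂) fun a ha => if_neg fun h => ha (hinj.prodMap hinj h).symm,
    if_pos rfl, ← ENNReal.toReal_eq_toReal_iff' (PMF.apply_ne_top _ _) (PMF.apply_ne_top _ _)]
  exact (pairLaw_apply_toReal (fun i => permQ π (![q₁, q₂] i))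
      (fun i => permQ π (![b₁, b₂] i))).trans
    ((hfold 2 ![q₁, q₂] (fun _ => π) ![b₁, b₂] hk).symm.trans
      (pairLaw_apply_toReal ![q₁, q₂] ![b₁, b₂]).symm)

end Folding

lemma two_mul_expect_sub_one_le_expect_shift {V : Type*} [Fintype V] [Nonempty V] [AddGroup V]
    (c : V → V → V → ℝ) (hc : ∀ w z₁ z₂ z₃, c w z₁ z₃ + c w z₂ z₃ ≤ c w z₁ z₂ + 1) (Q : V) :
    2 * (𝔼 w, 𝔼 z₁, 𝔼 z₂, c w z₁ z₂) - 1 ≤ 𝔼 w, 𝔼 r, c w (Q + r) r := by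
  have hshift : ∀ w, 𝔼 r, 𝔼 z, c w (Q + r) z = 𝔼 z₁, 𝔼 z₂, c w z₁ z₂ := fun w =>
    Fintype.expect_equiv (Equiv.addLeft Q) _ _ fun _ => rfl
  calc 2 * (𝔼 w, 𝔼 z₁, 𝔼 z₂, c w z₁ z₂) - 1
      = 𝔼 w, 𝔼 r, 𝔼 z, (c w (Q + r) z + c w r z - 1) := by
        simp only [Finset.expect_sub_distrib, Finset.expect_add_distrib, Fintype.expect_const,
          hshift]
        ring
    _ ≤ 𝔼 w, 𝔼 r, 𝔼 z, c w (Q + r) r := by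
        gcongr with w _ r _ z _
        linarith [hc w (Q + r) r z]
    _ = 𝔼 w, 𝔼 r, c w (Q + r) r := by simp only [Fintype.expect_const]

lemma permQ_finAddFlip_append {t : ℕ} {β : Type*} (a b : Fin t → β) :
    permQ finAddFlip (Fin.append a b) = Fin.append b a := by
  funext j
  refine Fin.addCases (fun i => ?_) (fun i => ?_) j <;>
    simp only [permQ, finAddFlip_apply_castAdd, finAddFlip_apply_natAdd, Fin.append_left,
      Fin.append_right]

section Consistency

variable {n t k : ℕ} {F : NSFam n (t + t)}

variable (F) in
noncomputable def consAgree (w z₁ z₂ : Fin t → Fin n → ZMod 2) : ℝ :=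
  prob (pairLaw F (Fin.append w z₁) (Fin.append w z₂))
    {y | ∀ j : Fin t, y.1 (Fin.castAdd t j) = y.2 (Fin.castAdd t j)}

lemma consTestAccept_eq_expect : consTestAccept F = 𝔼 w, 𝔼 z₁, 𝔼 z₂, consAgree F w z₁ z₂ := by
  rw [consTestAccept, prob_bind_uniformOfFintype]
  simp only [← Finset.univ_product_univ, Finset.expect_product]
  rfl

lemma IsNonSignaling.consAgree_add_le (hns : IsNonSignaling k F) (hk : 3 ≤ k)
    (w z₁ z₂ z₃ : Fin t → Fin n → ZMod 2) :
    consAgree F w z₁ z₃ + consAgree F w z₂ z₃ ≤ consAgree F w z₁ z₂ + 1 :=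
  hns.prob_pairLaw_add_le hk
    (r := fun u v => ∀ j : Fin t, u (Fin.castAdd t j) = v (Fin.castAdd t j))
    (fun _ _ _ hac hbc j => (hac j).trans (hbc j).symm) _ _ _

lemma IsPermFolded.prob_pairLaw_agree_natAdd (hfold : IsPermFolded k F) (hk : 2 ≤ k)
    (a b w : Fin t → Fin n → ZMod 2) :
    prob (pairLaw F (Fin.append a w) (Fin.append b w))
        {y | ∀ j : Fin t, y.1 (Fin.natAdd t j) = y.2 (Fin.natAdd t j)}
      = consAgree F w a b := by
  rw [← permQ_finAddFlip_append w a, ← permQ_finAddFlip_append w b,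
    hfold.pairLaw_permQ hk, prob_map]
  simp only [Set.preimage_ofPred_eq, Prod.map_fst, Prod.map_snd, permQ, finAddFlip_apply_natAdd]
  rfl

end Consistency

/-- if a permutation-folded `2t`-repeated `k`-non-signaling function
(`k ≥ 6`) passes the linearity test and the consistency test each with probability at
least `1-ε`, then for any fixed `Q` and uniformly random `R, W`, the answers to
`[Q+R;W]` and `[R;W]` agree on the second half of the coordinates with probability at
least `1-4ε`. -/
theorem shifted_agreement {n t k : ℕ} (ε : ℝ) (F : NSFam n (t + t))
    (hns : IsNonSignaling k F) (hk : 6 ≤ k)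
    (hfold : IsPermFolded k F)
    (hcons : consTestAccept F ≥ 1 - ε) :
    ∀ Q : Fin t → Fin n → ZMod 2,
      prob ((PMF.uniformOfFintype ((Fin t → Fin n → ZMod 2) ×
          (Fin t → Fin n → ZMod 2))).bind fun rw =>
          (F {Fin.append (Q + rw.1) rw.2, Fin.append rw.1 rw.2}).map fun f =>
            (f ⟨Fin.append (Q + rw.1) rw.2, by simp⟩, f ⟨Fin.append rw.1 rw.2, by simp⟩))
        {y : (Fin (t + t) → ZMod 2) × (Fin (t + t) → ZMod 2) |
          ∀ j : Fin t, y.1 (Fin.natAdd t j) = y.2 (Fin.natAdd t j)}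
        ≥ 1 - 4 * ε := by
  intro Q
  have hε : 0 ≤ ε := by
    have : consTestAccept F ≤ 1 := prob_le_one _ _
    linarith
  have hshift := two_mul_expect_sub_one_le_expect_shift (consAgree F)
    (hns.consAgree_add_le (by omega)) Q
  rw [← consTestAccept_eq_expect] at hshift
  rw [ge_iff_le, prob_bind_uniformOfFintype, ← Finset.univ_product_univ, Finset.expect_product,
    Finset.expect_comm]
  calc 1 - 4 * ε ≤ 𝔼 w, 𝔼 r, consAgree F w (Q + r) r := by linarith
    _ = _ := Finset.expect_congr rfl fun w _ => Finset.expect_congr rfl fun r _ =>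
        (hfold.prob_pairLaw_agree_natAdd (by omega) _ _ _).symm
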